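/- arXiv:0802.3401 — 2 statements merged into one kernel-verified Lean document; each statement's English description precedes it below -/
import Mathlib

section
/- Let f: 2^[M] → ℝ_{≥0} be defined by f(S) = I(X_S; Y | X_{S^c}) for independent finite inputs X_1,...,X_M and output Y. Define R = {r ∈ ℝ_{≥0}^M : ∑_{i∈S} r_i ≤ f(S) for all S ⊆ [M]}. If r ∈ R satisfies ∑_{i∈S} r_i = f(S) for a set S, then for every L ⊆ S, I(X_L; Y | X_{S^c}) ≤ ∑_{i∈L} r_i ≤ I(X_L; Y | X_{L^c}). -/
/-!
The upper bound is the defining constraint of `R` for `L`. For the lower bound, the chain rule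
splits `I(X_S; Y | X_{Sᶜ})` as `I(X_L; Y | X_{Sᶜ}) + I(X_{S∖L}; Y | X_{(S∖L)ᶜ})`; on the facet the
left side is `∑_{i∈S} r_i`, while the second summand is at least `∑_{i∈S∖L} r_i` because `r ∈ R`.
-/

open Finset

/-- Marginal joint pmf of `(X_S, Y)` obtained from the joint pmf `p` of
`(X_1,…,X_M, Y)` by summing out inputs outside `S`; evaluated at the
values that `x` takes on `S` and at `y`. -/
noncomputable def margXY {M : ℕ} {α : Fin M → Type*} [∀ i, Fintype (α i)]
    [∀ i, DecidableEq (α i)] {β : Type*} [Fintype β]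
    (p : (∀ i, α i) → β → ℝ) (S : Finset (Fin M)) (x : ∀ i, α i) (y : β) : ℝ :=
  ∑ x' : ∀ i, α i, if ∀ i ∈ S, x' i = x i then p x' y else 0

/-- Marginal pmf of `X_S`. -/
noncomputable def margX {M : ℕ} {α : Fin M → Type*} [∀ i, Fintype (α i)]
    [∀ i, DecidableEq (α i)] {β : Type*} [Fintype β]
    (p : (∀ i, α i) → β → ℝ) (S : Finset (Fin M)) (x : ∀ i, α i) : ℝ :=
  ∑ y : β, margXY p S x y

/-- Conditional mutual information `I(X_S; Y | X_A)`, via the standard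
sum formula. -/
noncomputable def condMI {M : ℕ} {α : Fin M → Type*} [∀ i, Fintype (α i)]
    [∀ i, DecidableEq (α i)] {β : Type*} [Fintype β]
    (p : (∀ i, α i) → β → ℝ) (S A : Finset (Fin M)) : ℝ :=
  ∑ x : ∀ i, α i, ∑ y : β,
    p x y * Real.log ((margXY p (S ∪ A) x y * margX p A x) /
      (margX p (S ∪ A) x * margXY p A x y))

/-- `p` is a probability mass function. -/
def IsProb {M : ℕ} {α : Fin M → Type*} [∀ i, Fintype (α i)]
    [∀ i, DecidableEq (α i)] {β : Type*} [Fintype β]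
    (p : (∀ i, α i) → β → ℝ) : Prop :=
  (∀ x y, 0 ≤ p x y) ∧ ∑ x : ∀ i, α i, ∑ y : β, p x y = 1

/-- The inputs `X_1, …, X_M` are mutually independent. -/
def IndepInputs {M : ℕ} {α : Fin M → Type*} [∀ i, Fintype (α i)]
    [∀ i, DecidableEq (α i)] {β : Type*} [Fintype β]
    (p : (∀ i, α i) → β → ℝ) : Prop :=
  ∀ x : ∀ i, α i, margX p Finset.univ x = ∏ i : Fin M, margX p {i} x

/-- Membership in the fundamental region `R`. -/
def memR {M : ℕ} {α : Fin M → Type*} [∀ i, Fintype (α i)]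
    [∀ i, DecidableEq (α i)] {β : Type*} [Fintype β]
    (p : (∀ i, α i) → β → ℝ) (r : Fin M → ℝ) : Prop :=
  (∀ i, 0 ≤ r i) ∧ ∀ S : Finset (Fin M), ∑ i ∈ S, r i ≤ condMI p S Sᶜ

/-- Membership in the front facet `F_S`. -/
def memF {M : ℕ} {α : Fin M → Type*} [∀ i, Fintype (α i)]
    [∀ i, DecidableEq (α i)] {β : Type*} [Fintype β]
    (p : (∀ i, α i) → β → ℝ) (S : Finset (Fin M)) (r : Fin M → ℝ) : Prop :=
  memR p r ∧ ∑ i ∈ S, r i = condMI p S Sᶜ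

/-- Membership in the back face `B_A`. -/
def memB {M : ℕ} {α : Fin M → Type*} [∀ i, Fintype (α i)]
    [∀ i, DecidableEq (α i)] {β : Type*} [Fintype β]
    (p : (∀ i, α i) → β → ℝ) (A : Finset (Fin M)) (r : Fin M → ℝ) : Prop :=
  memR p r ∧ ∀ i ∈ A, r i = 0

section ChainRule

variable {M : ℕ} {α : Fin M → Type*} [∀ i, Fintype (α i)] [∀ i, DecidableEq (α i)]
  {β : Type*} [Fintype β] {p : (∀ i, α i) → β → ℝ}

lemma margXY_nonneg (hp : ∀ x y, 0 ≤ p x y) (T : Finset (Fin M)) (x : ∀ i, α i) (y : β) :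
    0 ≤ margXY p T x y :=
  sum_nonneg fun x' _ => by split_ifs <;> simp [hp]

lemma le_margXY (hp : ∀ x y, 0 ≤ p x y) (T : Finset (Fin M)) (x : ∀ i, α i) (y : β) :
    p x y ≤ margXY p T x y := by
  have := single_le_sum (fun x' _ => by split_ifs <;> simp [hp])
    (mem_univ x) (f := fun x' => if ∀ i ∈ T, x' i = x i then p x' y else 0)
  simpa [margXY] using this

lemma margXY_le_margX (hp : ∀ x y, 0 ≤ p x y) (T : Finset (Fin M)) (x : ∀ i, α i) (y : β) :
    margXY p T x y ≤ margX p T x :=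
  single_le_sum (fun y' _ => margXY_nonneg hp T x y') (mem_univ y)

lemma margXY_pos (hp : ∀ x y, 0 ≤ p x y) (T : Finset (Fin M)) {x : ∀ i, α i} {y : β}
    (h : 0 < p x y) : 0 < margXY p T x y :=
  h.trans_le (le_margXY hp T x y)

lemma margX_pos (hp : ∀ x y, 0 ≤ p x y) (T : Finset (Fin M)) {x : ∀ i, α i} {y : β}
    (h : 0 < p x y) : 0 < margX p T x :=
  (margXY_pos hp T h).trans_le (margXY_le_margX hp T x y)

theorem condMI_add_condMI_union (hp : ∀ x y, 0 ≤ p x y) (L K A : Finset (Fin M)) :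
    condMI p L A + condMI p K (L ∪ A) = condMI p (L ∪ K) A := by
  have hunion : K ∪ (L ∪ A) = L ∪ K ∪ A := by
    rw [← union_assoc, union_comm K L]
  unfold condMI
  rw [← sum_add_distrib]
  refine sum_congr rfl fun x _ => ?_
  rw [← sum_add_distrib]
  refine sum_congr rfl fun y _ => ?_
  rcases (hp x y).eq_or_lt with h | h
  · simp [← h]
  rw [hunion, ← mul_add]
  have := margXY_pos hp A h
  have := margXY_pos hp (L ∪ A) h
  have := margXY_pos hp (L ∪ K ∪ A) h
  have := margX_pos hp A h
  have := margX_pos hp (L ∪ A) h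
  have := margX_pos hp (L ∪ K ∪ A) h
  -- the two log-ratios telescope: the `X_{L ∪ A}` marginals cancel
  rw [← Real.log_mul (by positivity) (by positivity)]
  congr 2
  field_simp

end ChainRule

theorem stmt9_general {M : ℕ} {α : Fin M → Type*} [∀ i, Fintype (α i)]
    [∀ i, DecidableEq (α i)] {β : Type*} [Fintype β]
    (p : (∀ i, α i) → β → ℝ) (hp : IsProb p)
    (r : Fin M → ℝ)
    (hR : ∀ S : Finset (Fin M), ∑ i ∈ S, r i ≤ condMI p S Sᶜ)
    (S : Finset (Fin M)) (hEq : ∑ i ∈ S, r i = condMI p S Sᶜ)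
    (L : Finset (Fin M)) (hL : L ⊆ S) :
    condMI p L Sᶜ ≤ ∑ i ∈ L, r i ∧ ∑ i ∈ L, r i ≤ condMI p L Lᶜ := by
  refine ⟨?_, hR L⟩
  have hcompl : L ∪ Sᶜ = (S \ L)ᶜ := by
    ext i
    simp only [mem_union, mem_compl, mem_sdiff]
    tauto
  have hchain : condMI p L Sᶜ + condMI p (S \ L) (S \ L)ᶜ = condMI p S Sᶜ := by
    rw [← hcompl, condMI_add_condMI_union hp.1, union_sdiff_of_subset hL]
  have hsplit : ∑ i ∈ S \ L, r i + ∑ i ∈ L, r i = ∑ i ∈ S, r i := sum_sdiff hL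
  linarith [hR (S \ L)]

/-- If `r ∈ R` lies on the front facet `F_S`, then for every `L ⊆ S`,
`I(X_L;Y|X_{Sᶜ}) ≤ ∑_{i∈L} r_i ≤ I(X_L;Y|X_{Lᶜ})`. -/
theorem stmt9 {M : ℕ} {α : Fin M → Type*} [∀ i, Fintype (α i)]
    [∀ i, DecidableEq (α i)] {β : Type*} [Fintype β]
    (p : (∀ i, α i) → β → ℝ) (hp : IsProb p) (hind : IndepInputs p)
    (r : Fin M → ℝ) (hr : ∀ i, 0 ≤ r i)
    (hR : ∀ S : Finset (Fin M), ∑ i ∈ S, r i ≤ condMI p S Sᶜ)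
    (S : Finset (Fin M)) (hEq : ∑ i ∈ S, r i = condMI p S Sᶜ)
    (L : Finset (Fin M)) (hL : L ⊆ S) :
    condMI p L Sᶜ ≤ ∑ i ∈ L, r i ∧ ∑ i ∈ L, r i ≤ condMI p L Lᶜ :=
  stmt9_general p hp r hR S hEq L hL
end

section
/- For every M ≥ 1, the total count ∑_{i=0}^{M} C(M,i)·(number of strictly decreasing chains of i nonempty subsets of an i-set, i.e., maximal chains) equals ∑_{i=0}^{M} C(M,i)·i! = ⌊e·M!⌋; i.e., the total number of vertices of the M-user capacity polytope is ⌊e·M!⌋. -/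
/-!
Choosing in each `cᵢ` of a nonempty strictly decreasing chain an element lying in no later `cⱼ`
gives distinct elements, so when the chain is as long as the ground set is large these choices
form a bijection `σ`, and `cᵢ = σ '' {j | i ≤ j}`. Maximal chains on an `i`-set are thus the
rankings of that set, and there are `i!` of them.

For the floor, `∑ C(M,i)·i! = M!·∑_{k ≤ M} 1/k!`, and the remaining tail `M!·∑_{k > M} 1/k!`
of `e·M!` lies in `[0, 1)` as soon as `M ≥ 1`.
-/

open Finset Nat

theorem StrictAnti.exists_mem_forall_notMem {ι α : Type*} [LinearOrder ι] [Finite ι]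
    {c : ι → Finset α} (hc : StrictAnti c) (hne : ∀ i, (c i).Nonempty) (i : ι) :
    ∃ x ∈ c i, ∀ j, i < j → x ∉ c j := by
  by_cases hlater : ∃ j, i < j
  · obtain ⟨j₀, hij₀, hmin⟩ := wellFounded_lt.has_min {j | i < j} hlater
    obtain ⟨x, hxi, hxj₀⟩ := exists_of_ssubset (hc hij₀)
    exact ⟨x, hxi, fun j hj hxj => hxj₀ (hc.antitone (not_lt.mp (hmin j hj)) hxj)⟩
  · obtain ⟨x, hx⟩ := hne i
    exact ⟨x, hx, fun j hj _ => hlater ⟨j, hj⟩⟩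

section rankChain

variable {ι α : Type*} [LinearOrder ι] [Fintype α]

def rankChain (r : α ≃ ι) (i : ι) : Finset α := {x | i ≤ r x}

theorem mem_rankChain {r : α ≃ ι} {i : ι} {x : α} : x ∈ rankChain r i ↔ i ≤ r x := by
  simp [rankChain]

theorem rankChain_nonempty (r : α ≃ ι) (i : ι) : (rankChain r i).Nonempty :=
  ⟨r.symm i, by simp [mem_rankChain]⟩

theorem rankChain_strictAnti (r : α ≃ ι) : StrictAnti (rankChain r) := by
  intro i j hij
  refine Finset.ssubset_iff_subset_ne.mpr ⟨fun x hx => ?_, fun h => ?_⟩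
  · exact mem_rankChain.mpr (hij.le.trans (mem_rankChain.mp hx))
  · have : r.symm i ∈ rankChain r j := h ▸ mem_rankChain.mpr (by simp)
    exact hij.not_ge (by simpa [mem_rankChain] using this)

theorem rankChain_injective : Function.Injective (rankChain (α := α) (ι := ι)) := by
  intro r r' h
  ext x
  have key : ∀ i, i ≤ r x ↔ i ≤ r' x := fun i => by
    rw [← mem_rankChain, ← mem_rankChain, h]
  exact le_antisymm ((key _).mp le_rfl) ((key _).mpr le_rfl)

variable [Fintype ι]

theorem StrictAnti.exists_eq_rankChain (hcard : Fintype.card ι = Fintype.card α)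
    {c : ι → Finset α} (hc : StrictAnti c) (hne : ∀ i, (c i).Nonempty) :
    ∃ r : α ≃ ι, c = rankChain r := by
  choose σ hσc hσ using hc.exists_mem_forall_notMem hne
  have hσinj : σ.Injective := by
    intro i j hij
    by_contra hij_ne
    rcases lt_or_gt_of_ne hij_ne with h | h
    · exact hσ i j h (hij ▸ hσc j)
    · exact hσ j i h (hij ▸ hσc i)
  let e := Equiv.ofBijective σ ((Fintype.bijective_iff_injective_and_card σ).mpr ⟨hσinj, hcard⟩)
  refine ⟨e.symm, funext fun i => Finset.ext fun x => ?_⟩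
  obtain ⟨k, rfl⟩ := e.surjective x
  rw [mem_rankChain, Equiv.symm_apply_apply]
  exact ⟨fun hk => not_lt.mp fun hki => hσ k i hki hk, fun hik => hc.antitone hik (hσc k)⟩

theorem card_nonempty_strictAnti_chains (hcard : Fintype.card ι = Fintype.card α) :
    Nat.card {c : ι → Finset α // (∀ i, (c i).Nonempty) ∧ ∀ i j, i < j → c j ⊂ c i} =
      (Fintype.card α)! := by
  classical
  let toChain :
      (α ≃ ι) → {c : ι → Finset α // (∀ i, (c i).Nonempty) ∧ ∀ i j, i < j → c j ⊂ c i} :=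
    fun r => ⟨rankChain r, rankChain_nonempty r, fun _ _ h => rankChain_strictAnti r h⟩
  have hbij : toChain.Bijective := by
    refine ⟨fun r r' h => rankChain_injective (congrArg Subtype.val h), fun ⟨c, hne, hc⟩ => ?_⟩
    obtain ⟨r, rfl⟩ := StrictAnti.exists_eq_rankChain hcard (fun i j h => hc i j h) hne
    exact ⟨r, rfl⟩
  rw [← Nat.card_congr (Equiv.ofBijective toChain hbij), Nat.card_eq_fintype_card,
    Fintype.card_equiv (Fintype.equivOfCardEq hcard.symm)]

end rankChain

theorem cast_sum_choose_mul_factorial (M : ℕ) :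
    ((∑ i ∈ range (M + 1), M.choose i * i ! : ℕ) : ℝ) =
      M ! * ∑ k ∈ range (M + 1), 1 / (k ! : ℝ) := by
  rw [mul_sum, ← sum_range_reflect, Nat.cast_sum]
  refine sum_congr rfl fun i hi => ?_
  have hiM : i ≤ M := Nat.lt_succ_iff.mp (mem_range.mp hi)
  rw [Nat.add_sub_cancel, Nat.choose_symm hiM, Nat.cast_mul, Nat.cast_choose ℝ hiM]
  field_simp

theorem floor_exp_one_mul_factorial {M : ℕ} (hM : 1 ≤ M) :
    ⌊Real.exp 1 * M !⌋ = ∑ i ∈ range (M + 1), (M.choose i * i ! : ℤ) := by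
  set S := ∑ k ∈ range (M + 1), 1 / (k ! : ℝ)
  have hS : ((∑ i ∈ range (M + 1), (M.choose i * i ! : ℤ) : ℤ) : ℝ) = M ! * S := by
    exact_mod_cast cast_sum_choose_mul_factorial M
  have hlower : S ≤ Real.exp 1 := by
    simpa [S] using Real.sum_le_exp_of_nonneg zero_le_one (M + 1)
  have hupper : Real.exp 1 ≤ S + (M + 2) / ((M + 1)! * (M + 1)) := by
    have := Real.exp_bound' zero_le_one le_rfl M.succ_pos
    simp only [one_pow, one_div] at this
    simpa [S, add_assoc, one_add_one_eq_two] using this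
  have htail : (M ! : ℝ) * ((M + 2) / ((M + 1)! * (M + 1))) < 1 := by
    have hM' : (1 : ℝ) ≤ M := by exact_mod_cast hM
    rw [Nat.factorial_succ, Nat.cast_mul, mul_div_assoc', div_lt_one (by positivity)]
    push_cast
    have hfac : (0 : ℝ) < M ! := by positivity
    nlinarith [mul_pos hfac (show (0 : ℝ) < M * M + M - 1 by nlinarith)]
  rw [Int.floor_eq_iff, hS]
  have hfac : (0 : ℝ) ≤ M ! := by positivity
  constructor
  · rw [mul_comm]
    exact mul_le_mul_of_nonneg_right hlower hfac
  · nlinarith [mul_le_mul_of_nonneg_right hupper hfac]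

/-- For `M ≥ 1`, the total number of vertices of the `M`-user capacity
polytope is `∑_{i=0}^{M} C(M,i)·(#maximal chains on an i-set)
= ∑_{i=0}^{M} C(M,i)·i! = ⌊e·M!⌋`. -/
theorem stmt19 (M : ℕ) (hM : 1 ≤ M) :
    (∑ i ∈ Finset.range (M + 1),
        M.choose i * Nat.card {c : Fin i → Finset (Fin i) //
          (∀ j, (c j).Nonempty) ∧ (∀ j k, j < k → c k ⊂ c j)} =
      ∑ i ∈ Finset.range (M + 1), M.choose i * i.factorial) ∧
    ((∑ i ∈ Finset.range (M + 1), M.choose i * i.factorial : ℤ) =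
      ⌊Real.exp 1 * (M.factorial : ℝ)⌋) := by
  refine ⟨sum_congr rfl fun i _ => ?_, (floor_exp_one_mul_factorial hM).symm⟩
  rw [card_nonempty_strictAnti_chains rfl, Fintype.card_fin]
end
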